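/- arXiv:1707.02380 — 3 statements merged into one kernel-verified Lean document; each statement's English description precedes it below -/
import Mathlib

section
/- For all complex numbers x, x̄ (with x̄ ≠ 0 allowed) and positive reals y, ȳ, the inequality ln(1 + |x|²/y) ≥ ln(1 + |x̄|²/ȳ) - |x̄|²/ȳ + 2·Re(x̄* x)/ȳ - |x̄|²(|x|² + y)/(ȳ(ȳ + |x̄|²)) holds, i.e., the function (x,y) ↦ ln(1 + |x|²/y) admits this first-order lower bound at (x̄, ȳ). -/
/-!
Write `t = ‖x‖² / y` and `z = y + ‖x‖²`. Concavity of `log` gives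
`log (1 + t) ≥ log (1 + t̄) + 1 - (1 + t̄) / (1 + t)`, and `1 / (1 + t) = 1 - ‖x‖² / z`.
The remaining term `‖x‖² / z` is a quadratic-over-linear function, jointly convex in `(x, z)`,
so it dominates its tangent plane at `(x̄, z̄)`; with `1 + t̄ = z̄ / ȳ` this is the stated bound.
-/

open RealInnerProductSpace

theorem Real.log_add_one_sub_div_le_log {a b : ℝ} (ha : 0 < a) (hb : 0 < b) :
    Real.log b + 1 - b / a ≤ Real.log a := by
  have h := Real.one_sub_inv_le_log_of_pos (div_pos ha hb)
  rw [Real.log_div ha.ne' hb.ne', inv_div] at h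
  linarith

theorem two_mul_inner_div_sub_le_norm_sq_div {E : Type*} [NormedAddCommGroup E]
    [InnerProductSpace ℝ E] (u v : E) {s t : ℝ} (hs : 0 < s) (ht : 0 < t) :
    2 * ⟪u, v⟫ / s - ‖u‖ ^ 2 * t / s ^ 2 ≤ ‖v‖ ^ 2 / t := by
  have hsq : 0 ≤ ‖t • u - s • v‖ ^ 2 := sq_nonneg _
  rw [norm_sub_sq_real, norm_smul, norm_smul, real_inner_smul_left, real_inner_smul_right,
    Real.norm_of_nonneg ht.le, Real.norm_of_nonneg hs.le] at hsq
  rw [div_sub_div _ _ hs.ne' (by positivity), div_le_div_iff₀ (by positivity) ht]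
  nlinarith [mul_pos hs ht]

theorem stmt_0 (x xb : ℂ) (y yb : ℝ) (hy : 0 < y) (hyb : 0 < yb) :
    Real.log (1 + ‖x‖ ^ 2 / y) ≥
      Real.log (1 + ‖xb‖ ^ 2 / yb) - ‖xb‖ ^ 2 / yb
        + 2 * ((starRingEnd ℂ xb * x).re) / yb
        - ‖xb‖ ^ 2 * (‖x‖ ^ 2 + y) / (yb * (yb + ‖xb‖ ^ 2)) := by
  have hz : 0 < ‖x‖ ^ 2 + y := by positivity
  have hzb : 0 < yb + ‖xb‖ ^ 2 := by positivity
  have hlog := Real.log_add_one_sub_div_le_log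
    (show 0 < 1 + ‖x‖ ^ 2 / y by positivity) (show 0 < 1 + ‖xb‖ ^ 2 / yb by positivity)
  have htangent := two_mul_inner_div_sub_le_norm_sq_div xb x hzb hz
  rw [Complex.inner, mul_comm x] at htangent
  have hscaled := mul_le_mul_of_nonneg_left htangent (show 0 ≤ (yb + ‖xb‖ ^ 2) / yb by positivity)
  have hratio : 1 - (1 + ‖xb‖ ^ 2 / yb) / (1 + ‖x‖ ^ 2 / y) =
      -(‖xb‖ ^ 2 / yb) + (yb + ‖xb‖ ^ 2) / yb * (‖x‖ ^ 2 / (‖x‖ ^ 2 + y)) := by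
    field_simp
    ring
  have hscaled_eq : (yb + ‖xb‖ ^ 2) / yb * (2 * (starRingEnd ℂ xb * x).re / (yb + ‖xb‖ ^ 2)
      - ‖xb‖ ^ 2 * (‖x‖ ^ 2 + y) / (yb + ‖xb‖ ^ 2) ^ 2) =
      2 * (starRingEnd ℂ xb * x).re / yb - ‖xb‖ ^ 2 * (‖x‖ ^ 2 + y) / (yb * (yb + ‖xb‖ ^ 2)) := by
    field_simp
  linarith
end

section
/- For N×N Hermitian matrices F and A with F positive semidefinite, tr(F·A) ≥ Σᵢ λᵢ(F)·λ_{N−i+1}(A), where λ₁ ≥ λ₂ ≥ ... ≥ λ_N denote eigenvalues sorted in decreasing order. -/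
/-!
Diagonalize `F = U D_F U*` and `A = V D_A V*` and put `W = U* V`. Then
`re tr(FA) = ∑ i j, λ_i(F) λ_j(A) |W_ij|²`, and the matrix `(|W_ij|²)` is doubly stochastic
because `W` is unitary. By Birkhoff's theorem this linear function of the doubly stochastic matrix
is bounded below by its value `∑ i, λ_i(F) λ_{π i}(A)` at some permutation matrix, and by the
rearrangement inequality any such pairing dominates the reversed pairing of the sorted eigenvalues.
-/

open Finset Matrix

section DoublyStochastic

variable {R m n : Type*} [Fintype m] [DecidableEq m] [Fintype n] [DecidableEq n]

lemma submatrix_mem_doublyStochastic [Semiring R] [PartialOrder R] [IsOrderedRing R]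
    {M : Matrix n n R} (hM : M ∈ doublyStochastic R n) (e₁ e₂ : m ≃ n) :
    M.submatrix e₁ e₂ ∈ doublyStochastic R m := by
  rw [mem_doublyStochastic_iff_sum] at hM ⊢
  obtain ⟨hnonneg, hrow, hcol⟩ := hM
  refine ⟨fun i j => hnonneg _ _, fun i => ?_, fun j => ?_⟩
  · simpa only [submatrix_apply] using (e₂.sum_comp (M (e₁ i))).trans (hrow _)
  · simpa only [submatrix_apply] using (e₁.sum_comp (M · (e₂ j))).trans (hcol _)

lemma sum_sum_permMatrix_mul [Semiring R] (σ : Equiv.Perm n) (c : Matrix n n R) :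
    ∑ i, ∑ j, σ.permMatrix R i j * c i j = ∑ i, c i (σ i) := by
  refine sum_congr rfl fun i _ => ?_
  simp [Equiv.Perm.permMatrix, PEquiv.toMatrix_apply, Equiv.toPEquiv_apply, ite_mul]

lemma exists_perm_sum_le_of_mem_doublyStochastic [Field R] [LinearOrder R] [IsStrictOrderedRing R]
    {S : Matrix n n R} (hS : S ∈ doublyStochastic R n) (c : Matrix n n R) :
    ∃ σ : Equiv.Perm n, ∑ i, c i (σ i) ≤ ∑ i, ∑ j, S i j * c i j := by
  obtain ⟨w, hw_nonneg, hw_sum, rfl⟩ := exists_eq_sum_perm_of_mem_doublyStochastic hS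
  obtain ⟨σ₀, -, hσ₀⟩ := exists_min_image univ (fun σ : Equiv.Perm n => ∑ i, c i (σ i))
    univ_nonempty
  refine ⟨σ₀, ?_⟩
  calc ∑ i, c i (σ₀ i) = ∑ σ, w σ * ∑ i, c i (σ₀ i) := by rw [← sum_mul, hw_sum, one_mul]
    _ ≤ ∑ σ, w σ * ∑ i, c i (σ i) :=
        sum_le_sum fun σ _ => mul_le_mul_of_nonneg_left (hσ₀ σ (mem_univ σ)) (hw_nonneg σ)
    _ = ∑ i, ∑ j, (∑ σ, w σ • σ.permMatrix R) i j * c i j := by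
        simp_rw [← sum_sum_permMatrix_mul, mul_sum, Matrix.sum_apply, Matrix.smul_apply,
          smul_eq_mul, sum_mul, mul_assoc]
        rw [sum_comm]
        exact sum_congr rfl fun i _ => sum_comm

end DoublyStochastic

lemma sum_mul_rev_le_sum_mul_perm {α : Type*} [CommRing α] [LinearOrder α]
    [IsStrictOrderedRing α] {N : ℕ} {μ ν : Fin N → α} (hμ : Antitone μ) (hν : Antitone ν)
    (π : Equiv.Perm (Fin N)) :
    ∑ i, μ i * ν (Fin.rev i) ≤ ∑ i, μ i * ν (π i) := by
  have hanti := hμ.antivary (hν.comp Fin.rev_anti)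
  simpa [Fin.rev_rev] using hanti.sum_mul_le_sum_mul_comp_perm (σ := π.trans Fin.revPerm)

section Unitary

variable {𝕜 n : Type*} [RCLike 𝕜] [Fintype n] [DecidableEq n]

lemma norm_sq_mem_doublyStochastic_of_mem_unitaryGroup {W : Matrix n n 𝕜}
    (hW : W ∈ unitaryGroup n 𝕜) :
    of (fun i j => ‖W i j‖ ^ 2) ∈ doublyStochastic ℝ n := by
  refine mem_doublyStochastic_iff_sum.mpr ⟨fun i j => sq_nonneg _, fun i => ?_, fun j => ?_⟩
  · have h := congr_fun₂ (mem_unitaryGroup_iff.mp hW) i i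
    simp only [mul_apply, star_apply, RCLike.star_def, RCLike.mul_conj, one_apply_eq] at h
    exact_mod_cast h
  · have h := congr_fun₂ (mem_unitaryGroup_iff'.mp hW) j j
    simp only [mul_apply, star_apply, RCLike.star_def, RCLike.conj_mul, one_apply_eq] at h
    exact_mod_cast h

lemma re_trace_diagonal_mul_mul_diagonal_mul_star (d e : n → ℝ) (W : Matrix n n 𝕜) :
    RCLike.re (diagonal (RCLike.ofReal ∘ d) * W * diagonal (RCLike.ofReal ∘ e) * star W).trace =
      ∑ i, ∑ j, d i * e j * ‖W i j‖ ^ 2 := by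
  simp only [trace, diag_apply, mul_apply, diagonal_apply, ite_mul, zero_mul, mul_ite, mul_zero,
    sum_ite_eq, sum_ite_eq', mem_univ, if_true, map_sum, star_apply, Function.comp_apply]
  refine sum_congr rfl fun i _ => sum_congr rfl fun j _ => ?_
  rw [RCLike.star_def, show (d i : 𝕜) * W i j * e j * (starRingEnd 𝕜) (W i j) =
    ((d i * e j : ℝ) : 𝕜) * (W i j * (starRingEnd 𝕜) (W i j)) by push_cast; ring,
    RCLike.mul_conj, ← RCLike.ofReal_pow, ← RCLike.ofReal_mul, RCLike.ofReal_re]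

end Unitary

namespace Matrix.IsHermitian

variable {𝕜 n : Type*} [RCLike 𝕜] [Fintype n] [DecidableEq n] {A B : Matrix n n 𝕜}

lemma re_trace_mul_eq_sum (hA : A.IsHermitian) (hB : B.IsHermitian) :
    RCLike.re (A * B).trace = ∑ i, ∑ j, hA.eigenvalues i * hB.eigenvalues j *
      ‖(↑(star hA.eigenvectorUnitary * hB.eigenvectorUnitary) : Matrix n n 𝕜) i j‖ ^ 2 := by
  set U : Matrix n n 𝕜 := ↑hA.eigenvectorUnitary
  set V : Matrix n n 𝕜 := ↑hB.eigenvectorUnitary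
  set D : Matrix n n 𝕜 := diagonal (RCLike.ofReal ∘ hA.eigenvalues)
  set E : Matrix n n 𝕜 := diagonal (RCLike.ofReal ∘ hB.eigenvalues)
  have hAB : A * B = U * (D * star U * (V * E * star V)) := by
    conv_lhs => rw [hA.spectral_theorem, hB.spectral_theorem]
    simp only [Unitary.conjStarAlgAut_apply, Matrix.mul_assoc, U, V, D, E]
  rw [hAB, trace_mul_comm, ← re_trace_diagonal_mul_mul_diagonal_mul_star]
  simp only [Submonoid.coe_mul, Unitary.coe_star, star_mul, star_star, Matrix.mul_assoc,
    U, V, D, E]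

end Matrix.IsHermitian

open ComplexOrder in
theorem stmt_6_general {N : ℕ} (F A : Matrix (Fin N) (Fin N) ℂ)
    (hF : F.IsHermitian) (hA : A.IsHermitian)
    (μ ν : Fin N → ℝ) (σF σA : Equiv.Perm (Fin N))
    (hμ : μ = hF.eigenvalues ∘ σF) (hν : ν = hA.eigenvalues ∘ σA)
    (hμdec : Antitone μ) (hνdec : Antitone ν) :
    ∑ i : Fin N, μ i * ν (Fin.rev i) ≤ (F * A).trace.re := by
  set W := star hF.eigenvectorUnitary * hA.eigenvectorUnitary
  have hS := submatrix_mem_doublyStochastic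
    (norm_sq_mem_doublyStochastic_of_mem_unitaryGroup W.2) σF σA
  obtain ⟨π, hπ⟩ := exists_perm_sum_le_of_mem_doublyStochastic hS (of fun i j => μ i * ν j)
  calc ∑ i, μ i * ν (Fin.rev i) ≤ ∑ i, μ i * ν (π i) := sum_mul_rev_le_sum_mul_perm hμdec hνdec π
    _ ≤ _ := hπ
    _ = ∑ i, ∑ j, hF.eigenvalues i * hA.eigenvalues j *
          ‖(W : Matrix (Fin N) (Fin N) ℂ) i j‖ ^ 2 :=
        Fintype.sum_equiv σF _ _ fun i => Fintype.sum_equiv σA _ _ fun j => by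
          simp only [hμ, hν, submatrix_apply, of_apply, Function.comp_apply]; ring
    _ = (F * A).trace.re := (hF.re_trace_mul_eq_sum hA).symm

open ComplexOrder in
/-- Lower Ruhe/von Neumann trace inequality: for Hermitian `F, A` with `F` PSD,
`tr(F·A) ≥ ∑ i, λ_i(F) · λ_{N-i+1}(A)` where `μ, ν` enumerate the eigenvalues of
`F` and `A` respectively in decreasing order. -/
theorem stmt_6 {N : ℕ} (F A : Matrix (Fin N) (Fin N) ℂ)
    (hF : F.IsHermitian) (hA : A.IsHermitian) (hFpsd : F.PosSemidef)
    (μ ν : Fin N → ℝ) (σF σA : Equiv.Perm (Fin N))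
    (hμ : μ = hF.eigenvalues ∘ σF) (hν : ν = hA.eigenvalues ∘ σA)
    (hμdec : Antitone μ) (hνdec : Antitone ν) :
    ∑ i : Fin N, μ i * ν (Fin.rev i) ≤ (F * A).trace.re :=
  stmt_6_general F A hF hA μ ν σF σA hμ hν hμdec hνdec
end

section
/- Let X ~ Gamma(N,1), Y ~ Exponential(β/P) be independent with β, P > 0, σ² ≥ 0, and let ε ∈ (0,1), K a positive integer. Then Pr(Y ≤ λX + σ²) ≥ ε^{1/K} holds if and only if λ ≥ [exp(−βσ²/(N P)) / (1 − ε^{1/K})^{1/N} − 1]·(P/β). -/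
/-!
Conditioning on `X`, the exponential tail gives `Pr(Y > λX + σ² | X) = exp(-(β/P)(λX + σ²))`,
and the Laplace transform of `Gamma(N, 1)` at `βλ/P` is `(1 + βλ/P)^(-N)`, so
`Pr(Y ≤ λX + σ²) = 1 - exp(-βσ²/P) (1 + βλ/P)^(-N)`. The threshold condition is then solved
for `λ` by monotonicity of `t ↦ t^N`.
-/

open MeasureTheory ProbabilityTheory Real Set

namespace ProbabilityTheory

lemma expMeasure_Ioi {r t : ℝ} (hr : 0 < r) (ht : 0 ≤ t) :
    expMeasure r (Ioi t) = ENNReal.ofReal (exp (-(r * t))) := by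
  have := isProbabilityMeasure_expMeasure hr
  have hexp : exp (-(r * t)) ≤ 1 := exp_le_one_iff.mpr (by nlinarith)
  rw [← compl_Iic, prob_compl_eq_one_sub measurableSet_Iic, ← ofReal_cdf, cdf_expMeasure_eq hr,
    if_pos ht, ← ENNReal.ofReal_one, ← ENNReal.ofReal_sub _ (by linarith), sub_sub_cancel]

lemma ae_nonneg_gammaMeasure (a r : ℝ) : ∀ᵐ x ∂gammaMeasure a r, 0 ≤ x := by
  simp only [ae_iff, not_le]
  exact (withDensity_apply _ measurableSet_Iio).trans (lintegral_gammaPDF_of_nonpos le_rfl)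

lemma lintegral_exp_neg_mul_gammaMeasure {a r s : ℝ} (ha : 0 < a) (hr : 0 < r)
    (hrs : 0 < r + s) :
    ∫⁻ x, ENNReal.ofReal (exp (-(s * x))) ∂gammaMeasure a r
      = ENNReal.ofReal ((r / (r + s)) ^ a) := by
  have tilt : ∀ x, gammaPDF a r x * ENNReal.ofReal (exp (-(s * x)))
      = ENNReal.ofReal ((r / (r + s)) ^ a) * gammaPDF a (r + s) x := by
    intro x
    rcases lt_or_ge x 0 with hx | hx
    · simp [gammaPDF_of_neg hx]
    · rw [gammaPDF_of_nonneg hx, gammaPDF_of_nonneg hx, ← ENNReal.ofReal_mul (by positivity),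
        ← ENNReal.ofReal_mul (by positivity), div_rpow hr.le hrs.le]
      congr 1
      have hexp_add : exp (-(r * x)) * exp (-(s * x)) = exp (-((r + s) * x)) := by
        rw [← exp_add]; ring_nf
      have hG : Gamma a ≠ 0 := (Gamma_pos_of_pos ha).ne'
      have hR : (r + s) ^ a ≠ 0 := (rpow_pos_of_pos hrs a).ne'
      rw [mul_assoc _ (exp _), hexp_add]
      field_simp
  have hpdf : ∀ b, Measurable (gammaPDF a b) :=
    fun b ↦ (measurable_gammaPDFReal a b).ennreal_ofReal
  rw [gammaMeasure, lintegral_withDensity_eq_lintegral_mul _ (hpdf r) (by fun_prop)]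
  simp only [Pi.mul_apply, tilt]
  rw [lintegral_const_mul _ (hpdf (r + s)), lintegral_gammaPDF_eq_one ha hrs, mul_one]

lemma IndepFun.measure_preimage_prodMk {Ω α β : Type*} [MeasurableSpace Ω] [MeasurableSpace α]
    [MeasurableSpace β] {μ : Measure Ω} [IsFiniteMeasure μ] {X : Ω → α} {Y : Ω → β}
    (hXY : IndepFun X Y μ) (hX : AEMeasurable X μ) (hY : AEMeasurable Y μ)
    {S : Set (α × β)} (hS : MeasurableSet S) :
    μ ((fun ω ↦ (X ω, Y ω)) ⁻¹' S) = ∫⁻ x, μ.map Y (Prod.mk x ⁻¹' S) ∂μ.map X := by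
  rw [← Measure.map_apply_of_aemeasurable (hX.prodMk hY) hS,
    hXY.map_prod_eq_prod_map_map hX hY, Measure.prod_apply hS]

section GammaExp

variable {Ω : Type*} [MeasurableSpace Ω] {μ : Measure Ω} [IsProbabilityMeasure μ] {X Y : Ω → ℝ}
  {a s r lam σ : ℝ}

lemma measure_mul_add_lt_of_gamma_exp (ha : 0 < a) (hs : 0 < s) (hr : 0 < r)
    (hXY : IndepFun X Y μ) (hX : μ.map X = gammaMeasure a s) (hY : μ.map Y = expMeasure r)
    (hlam : 0 ≤ lam) (hσ : 0 ≤ σ) :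
    μ {ω | lam * X ω + σ < Y ω}
      = ENNReal.ofReal (exp (-(r * σ)) * (s / (s + r * lam)) ^ a) := by
  have := isProbabilityMeasure_gammaMeasure ha hs
  have := isProbabilityMeasure_expMeasure hr
  have hXm : AEMeasurable X μ := aemeasurable_of_map_neZero (by rw [hX]; infer_instance)
  have hYm : AEMeasurable Y μ := aemeasurable_of_map_neZero (by rw [hY]; infer_instance)
  have hS : MeasurableSet {p : ℝ × ℝ | lam * p.1 + σ < p.2} :=
    measurableSet_lt (by fun_prop) measurable_snd
  have tail : ∀ᵐ x ∂gammaMeasure a s, expMeasure r (Ioi (lam * x + σ))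
      = ENNReal.ofReal (exp (-(r * σ))) * ENNReal.ofReal (exp (-(r * lam * x))) := by
    filter_upwards [ae_nonneg_gammaMeasure a s] with x hx
    rw [expMeasure_Ioi hr (by positivity), ← ENNReal.ofReal_mul (exp_nonneg _), ← exp_add]
    ring_nf
  change μ ((fun ω ↦ (X ω, Y ω)) ⁻¹' {p | lam * p.1 + σ < p.2}) = _
  rw [hXY.measure_preimage_prodMk hXm hYm hS, hX, hY]
  change ∫⁻ x, expMeasure r (Ioi (lam * x + σ)) ∂gammaMeasure a s = _
  rw [lintegral_congr_ae tail, lintegral_const_mul _ (by fun_prop),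
    lintegral_exp_neg_mul_gammaMeasure ha hs (by positivity), ← ENNReal.ofReal_mul (exp_nonneg _)]

lemma measure_le_mul_add_of_gamma_exp (ha : 0 < a) (hs : 0 < s) (hr : 0 < r)
    (hXY : IndepFun X Y μ) (hX : μ.map X = gammaMeasure a s) (hY : μ.map Y = expMeasure r)
    (hlam : 0 ≤ lam) (hσ : 0 ≤ σ) :
    μ {ω | Y ω ≤ lam * X ω + σ}
      = ENNReal.ofReal (1 - exp (-(r * σ)) * (s / (s + r * lam)) ^ a) := by
  have := isProbabilityMeasure_gammaMeasure ha hs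
  have := isProbabilityMeasure_expMeasure hr
  have hXm : AEMeasurable X μ := aemeasurable_of_map_neZero (by rw [hX]; infer_instance)
  have hYm : AEMeasurable Y μ := aemeasurable_of_map_neZero (by rw [hY]; infer_instance)
  have hcompl : {ω | Y ω ≤ lam * X ω + σ} = {ω | lam * X ω + σ < Y ω}ᶜ := by
    ext; simp
  rw [hcompl, prob_compl_eq_one_sub₀ (nullMeasurableSet_lt (by fun_prop) hYm),
    measure_mul_add_lt_of_gamma_exp ha hs hr hXY hX hY hlam hσ, ← ENNReal.ofReal_one,
    ← ENNReal.ofReal_sub _ (by positivity)]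

end GammaExp

end ProbabilityTheory

lemma mul_one_div_rpow_le_iff {e q b n : ℝ} (he : 0 ≤ e) (hq : 0 < q) (hb : 0 < b)
    (hn : 0 < n) :
    e * (1 / b) ^ n ≤ q ↔ (e / q) ^ (1 / n) ≤ b := by
  rw [div_rpow zero_le_one hb.le, one_rpow, ← div_eq_mul_one_div, div_le_iff₀ (by positivity),
    ← div_le_iff₀' hq, one_div, rpow_inv_le_iff_of_pos (by positivity) hb.le hn]

/-- With `X ~ Gamma(N,1)`, `Y ~ Exponential(β/P)` independent, `σ² ≥ 0`, `ε ∈ (0,1)`,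
`K` a positive integer and `λ ≥ 0`: `Pr(Y ≤ λX + σ²) ≥ ε^{1/K}` iff
`λ ≥ [exp(−βσ²/(N P))/(1 − ε^{1/K})^{1/N} − 1]·(P/β)`. -/
theorem stmt_13 {Ω : Type*} [MeasureSpace Ω] (μ : Measure Ω) [IsProbabilityMeasure μ]
    (N : ℕ) (hN : 0 < N) (β P : ℝ) (hβ : 0 < β) (hP : 0 < P)
    (X Y : Ω → ℝ) (hXY : IndepFun X Y μ)
    (hX : μ.map X = gammaMeasure N (1 : ℝ))
    (hY : μ.map Y = expMeasure (β / P))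
    (σsq : ℝ) (hσ : 0 ≤ σsq) (ε : ℝ) (hε : ε ∈ Set.Ioo (0 : ℝ) 1)
    (K : ℕ) (hK : 0 < K) (lam : ℝ) (hlam : 0 ≤ lam) :
    ENNReal.ofReal (ε ^ ((1 : ℝ) / K)) ≤ μ {ω | Y ω ≤ lam * X ω + σsq} ↔
      (Real.exp (-(β * σsq) / (N * P)) / (1 - ε ^ ((1 : ℝ) / K)) ^ ((1 : ℝ) / N) - 1)
          * (P / β) ≤ lam := by
  set c := ε ^ ((1 : ℝ) / K)
  have hc0 : 0 < c := rpow_pos_of_pos hε.1 _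
  have hc1 : c < 1 := rpow_lt_one hε.1.le hε.2 (by positivity)
  have hNpos : (0 : ℝ) < N := Nat.cast_pos.2 hN
  have hexp : exp (-(β / P * σsq)) ^ ((1 : ℝ) / N) = exp (-(β * σsq) / (N * P)) := by
    rw [← exp_mul]; field_simp
  rw [measure_le_mul_add_of_gamma_exp hNpos one_pos (div_pos hβ hP) hXY hX hY hlam hσ,
    ENNReal.ofReal_le_ofReal_iff', or_iff_left hc0.not_ge, le_sub_comm,
    mul_one_div_rpow_le_iff (exp_nonneg _) (sub_pos.2 hc1) (by positivity) hNpos,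
    div_rpow (exp_nonneg _) (sub_pos.2 hc1).le, hexp, ← le_div_iff₀ (div_pos hP hβ),
    sub_le_iff_le_add', div_div_eq_mul_div, mul_comm lam β, mul_div_right_comm]
end
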